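/- Let G = (V,E) be a finite simple graph with |V| ≥ 2. Define the cognitive radio network I where the channel set is E, the SU set is V, SpecMap(v) is the set of edges of G incident to v, every SU has antenna budget 2, and the potential graph is the complete graph on V. Then G contains a Hamiltonian path if and only if I is connectable. -/

import Mathlib

/-!
Under a spectrum assignment of this network, two SUs are linked exactly when both keep the edge of
`G` joining them, and each keeps at most two edges. So every realized graph is a subgraph of `G` of
maximum degree two, and a Hamiltonian path of `G`, each vertex keeping its path edges, is realized.
Conversely, a connected graph of maximum degree two has a Hamiltonian path: a path missing a vertex
has a neighbour outside it, attached at an endpoint since interior vertices already have both their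
neighbours on the path, so the path can be extended.
-/

/-- A cognitive radio network: secondary users `U`, channels `C`,
spectrum maps, a potential graph, and antenna budgets. -/
structure CRN (U C : Type) where
  SpecMap : U → Finset C
  PG : SimpleGraph U
  budget : U → ℕ

/-- A valid spectrum assignment: each SU opens a subset of its spectrum map
of size at most its antenna budget. -/
def CRN.ValidSA {U C : Type} [DecidableEq C] (I : CRN U C) (SA : U → Finset C) : Prop :=
  ∀ u, SA u ⊆ I.SpecMap u ∧ (SA u).card ≤ I.budget u

/-- The realization graph under a spectrum assignment: potential edges whose
endpoints share an opened channel. -/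
def CRN.RG {U C : Type} [DecidableEq C] (I : CRN U C) (SA : U → Finset C) : SimpleGraph U where
  Adj u v := I.PG.Adj u v ∧ (SA u ∩ SA v).Nonempty
  symm := ⟨fun u v h => ⟨I.PG.symm.symm _ _ h.1, by rw [Finset.inter_comm]; exact h.2⟩⟩
  loopless := ⟨fun u h => I.PG.loopless.irrefl u h.1⟩

/-- A network is connectable if some valid spectrum assignment makes the
realization graph connected. -/
def CRN.Connectable {U C : Type} [DecidableEq C] (I : CRN U C) : Prop :=
  ∃ SA, I.ValidSA SA ∧ (I.RG SA).Connected

namespace SimpleGraph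

variable {V : Type*} {G : SimpleGraph V}

namespace Walk

lemma IsPath.length_filter_mem_edges_le_two [DecidableEq V] {u w : V} {p : G.Walk u w}
    (hp : p.IsPath) (v : V) : (p.edges.filter (v ∈ ·)).length ≤ 2 := by
  -- charge the start vertex for one extra edge, so that the bound survives prepending an edge
  suffices ∀ {u w : V} (p : G.Walk u w), p.IsPath →
      (p.edges.filter (v ∈ ·)).length + (if v = u then 1 else 0) ≤ 2 from
    (Nat.le_add_right _ _).trans (this p hp)
  intro u w p hp
  induction p with
  | nil => split <;> simp
  | @cons u x w h p ih =>
    rw [cons_isPath_iff] at hp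
    by_cases hvu : v = u
    · subst hvu
      have : p.edges.filter (v ∈ ·) = [] :=
        List.filter_eq_nil_iff.mpr fun e he hve =>
          hp.2 (p.mem_support_of_mem_edges he (by simpa using hve))
      simp [this]
    · have := ih hp.1
      by_cases hvx : v = x <;> simp_all [Sym2.mem_iff]

lemma IsPath.eq_start_or_eq_end_of_adj_notMem_support {u w a b : V} {p : G.Walk u w}
    (hp : p.IsPath) (hdeg : (G.neighborSet b).encard ≤ 2) (hb : b ∈ p.support)
    (ha : a ∉ p.support) (hab : G.Adj b a) : b = u ∨ b = w := by
  by_contra! hbuw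
  obtain ⟨i, rfl, hi⟩ := mem_support_iff_exists_getVert.mp hb
  have hi0 : i ≠ 0 := by rintro rfl; simp at hbuw
  have hil : i < p.length := hi.lt_of_ne (by rintro rfl; simp at hbuw)
  have hsub : insert a (p.toSubgraph.neighborSet (p.getVert i)) ⊆ G.neighborSet (p.getVert i) :=
    Set.insert_subset hab fun _ h => p.toSubgraph.adj_sub h
  have haS : a ∉ p.toSubgraph.neighborSet (p.getVert i) := fun h =>
    ha (p.mem_verts_toSubgraph.mp (p.toSubgraph.edge_vert h.symm))
  obtain ⟨x, y, hxy, hS⟩ :=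
    Set.ncard_eq_two.mp (hp.ncard_neighborSet_toSubgraph_internal_eq_two hi0 hil)
  have := Set.encard_le_encard hsub
  rw [Set.encard_insert_of_notMem haS, hS, Set.encard_pair hxy] at this
  exact absurd (this.trans hdeg) (by norm_num)

lemma IsPath.exists_isPath_length_succ {u w a b : V} {p : G.Walk u w} (hp : p.IsPath)
    (hdeg : ∀ v, (G.neighborSet v).encard ≤ 2) (ha : a ∉ p.support) (hb : b ∈ p.support)
    (hab : G.Adj b a) :
    ∃ (u' w' : V) (q : G.Walk u' w'), q.IsPath ∧ q.length = p.length + 1 := by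
  classical
  rcases hp.eq_start_or_eq_end_of_adj_notMem_support (hdeg b) hb ha hab with rfl | rfl
  · exact ⟨a, w, cons hab.symm p, hp.cons ha, rfl⟩
  · exact ⟨a, u, cons hab.symm p.reverse, hp.reverse.cons (by simpa using ha), by simp⟩

end Walk

variable [DecidableEq V]

lemma Connected.exists_isHamiltonian_of_isPath [Fintype V] (hG : G.Connected)
    (hdeg : ∀ v, (G.neighborSet v).encard ≤ 2) {u w : V} (p : G.Walk u w) (hp : p.IsPath) :
    ∃ (u' w' : V) (q : G.Walk u' w'), q.IsHamiltonian := by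
  by_cases hall : ∀ x, x ∈ p.support
  · exact ⟨u, w, p, hp.isHamiltonian_of_mem hall⟩
  push Not at hall
  obtain ⟨x, hx⟩ := hall
  obtain ⟨d, -, hd, hd'⟩ :=
    (hG.preconnected u x).some.exists_boundary_dart {v | v ∈ p.support} p.start_mem_support hx
  obtain ⟨u', w', q, hq, hlen⟩ := hp.exists_isPath_length_succ hdeg hd' hd d.adj
  have hlt := hq.length_lt
  exact hG.exists_isHamiltonian_of_isPath hdeg q hq
termination_by Fintype.card V - p.length

lemma Connected.exists_isHamiltonian [Fintype V] (hG : G.Connected)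
    (hdeg : ∀ v, (G.neighborSet v).encard ≤ 2) :
    ∃ (u w : V) (p : G.Walk u w), p.IsHamiltonian :=
  hG.exists_isHamiltonian_of_isPath hdeg (Walk.nil : G.Walk hG.nonempty.some _) .nil

end SimpleGraph

open SimpleGraph

section

variable {V : Type} [Fintype V] [DecidableEq V] {G : SimpleGraph V} [DecidableRel G.Adj]

variable (G) in
def incidenceCRN : CRN V (Sym2 V) := CRN.mk (fun v => G.incidenceFinset v) ⊤ (fun _ => 2)

namespace incidenceCRN

lemma rg_adj_iff {SA : V → Finset (Sym2 V)} (hSA : ∀ v, SA v ⊆ G.incidenceFinset v)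
    {x y : V} :
    ((incidenceCRN G).RG SA).Adj x y ↔ s(x, y) ∈ SA x ∧ s(x, y) ∈ SA y := by
  constructor
  · rintro ⟨hxy, e, he⟩
    rw [Finset.mem_inter] at he
    have hex := (mem_incidenceFinset ..).mp (hSA x he.1)
    have hey := (mem_incidenceFinset ..).mp (hSA y he.2)
    rwa [← (Sym2.mem_and_mem_iff hxy).mp ⟨hex.2, hey.2⟩]
  · rintro ⟨hx, hy⟩
    have hG : G.Adj x y := (G.mem_incidenceSet x y).mp ((mem_incidenceFinset ..).mp (hSA x hx))
    exact ⟨hG.ne, s(x, y), Finset.mem_inter.mpr ⟨hx, hy⟩⟩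

lemma rg_le {SA : V → Finset (Sym2 V)} (hSA : ∀ v, SA v ⊆ G.incidenceFinset v) :
    (incidenceCRN G).RG SA ≤ G := fun x y h =>
  (G.mem_incidenceSet x y).mp ((mem_incidenceFinset ..).mp (hSA x ((rg_adj_iff hSA).mp h).1))

lemma encard_neighborSet_rg_le {SA : V → Finset (Sym2 V)} (hSA : (incidenceCRN G).ValidSA SA)
    (v : V) : (((incidenceCRN G).RG SA).neighborSet v).encard ≤ 2 := by
  have hmaps : Set.MapsTo (fun w => s(v, w)) (((incidenceCRN G).RG SA).neighborSet v) (SA v) :=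
    fun w hw => ((rg_adj_iff fun u => (hSA u).1).mp hw).1
  calc _ ≤ (SA v : Set (Sym2 V)).encard :=
        Set.encard_le_encard_of_injOn hmaps fun _ _ _ _ => Sym2.congr_right.mp
    _ ≤ 2 := by rw [Set.encard_coe_eq_coe_finsetCard]; exact_mod_cast (hSA v).2

lemma connectable_of_isHamiltonian {u w : V} {p : G.Walk u w} (hp : p.IsHamiltonian) :
    (incidenceCRN G).Connectable := by
  set SA : V → Finset (Sym2 V) := fun v => (p.edges.filter (v ∈ ·)).toFinset
  have hSA : ∀ v, SA v ⊆ G.incidenceFinset v := fun v e he => by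
    simp only [SA, List.mem_toFinset, List.mem_filter, decide_eq_true_eq] at he
    exact (mem_incidenceFinset ..).mpr ⟨p.edges_subset_edgeSet he.1, he.2⟩
  refine ⟨SA, fun v => ⟨hSA v, ?_⟩, ?_⟩
  · exact (List.toFinset_card_le _).trans (hp.isPath.length_filter_mem_edges_le_two v)
  have hedges : ∀ e ∈ p.edges, e ∈ ((incidenceCRN G).RG SA).edgeSet := by
    intro e he
    induction e with
    | h x y => exact (rg_adj_iff hSA).mpr ⟨by simp [SA, he], by simp [SA, he]⟩
  let q := p.transfer _ hedges
  refine (connected_iff_exists_forall_reachable _).mpr ⟨u, fun x => ?_⟩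
  have hx : x ∈ q.support := by simp [q, Walk.support_transfer, hp.mem_support x]
  exact (q.takeUntil x hx).reachable

lemma exists_isHamiltonian_of_connectable (h : (incidenceCRN G).Connectable) :
    ∃ (u w : V) (p : G.Walk u w), p.IsHamiltonian := by
  obtain ⟨SA, hSA, hconn⟩ := h
  obtain ⟨u, w, q, hq⟩ := hconn.exists_isHamiltonian (encard_neighborSet_rg_le hSA)
  have hle := rg_le fun v => (hSA v).1
  exact ⟨u, w, q.mapLe hle, hq.isPath.mapLe hle |>.isHamiltonian_of_mem fun x => by
    simp [hq.mem_support x]⟩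

end incidenceCRN

end

theorem stmt_6_general {V : Type} [Fintype V] [DecidableEq V]
    (G : SimpleGraph V) [DecidableRel G.Adj] :
    (∃ (u w : V) (p : G.Walk u w), p.IsHamiltonian) ↔
      (CRN.mk (fun v => G.incidenceFinset v) ⊤ (fun _ => 2) :
        CRN V (Sym2 V)).Connectable :=
  ⟨fun ⟨_, _, _, hp⟩ => incidenceCRN.connectable_of_isHamiltonian hp,
    incidenceCRN.exists_isHamiltonian_of_connectable⟩

/-- Hamiltonian path reduction: channels are the edges of G, SUs are the vertices,
the spectrum map of v is the set of edges incident to v, every budget is 2, and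
the potential graph is complete. Then G has a Hamiltonian path iff the network is
connectable. -/
theorem stmt_6 {V : Type} [Fintype V] [DecidableEq V]
    (G : SimpleGraph V) [DecidableRel G.Adj] (h2 : 2 ≤ Fintype.card V) :
    (∃ (u w : V) (p : G.Walk u w), p.IsHamiltonian) ↔
      (CRN.mk (fun v => G.incidenceFinset v) ⊤ (fun _ => 2) :
        CRN V (Sym2 V)).Connectable :=
  stmt_6_general G
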